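/- There exists a nonzero continuous group homomorphism from K to the discrete group ℚ/ℤ, where K is the Pontryagin dual of the discrete abelian group ℚ/ℤ; consequently (since K_op = K and (ℚ/ℤ)_op = 0) the inclusion f(G_op) ⊆ H_op can fail for a continuous homomorphism f : G → H when H is not torsion-free. -/

import Mathlib

/-- A subgroup `H` of an abelian group `G` is *pure* if `nH = H ∩ nG` for every positive `n`. -/
def IsPureSubgroup {G : Type*} [AddCommGroup G] (H : AddSubgroup G) : Prop :=
  ∀ n : ℕ, 0 < n →
    (fun x => n • x) '' (H : Set G) = (H : Set G) ∩ ((fun x => n • x) '' (Set.univ : Set G))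

/-- A subgroup `K ≤ H` is *pure in `H`* if `nK = K ∩ nH` for every positive `n`. -/
def IsPureIn {G : Type*} [AddCommGroup G] (K H : AddSubgroup G) : Prop :=
  ∀ n : ℕ, 0 < n →
    (fun x => n • x) '' (K : Set G) = (K : Set G) ∩ ((fun x => n • x) '' (H : Set G))

/-- The OP subgroup of `G`: the intersection of all open pure subgroups of `G`. -/
def opSubgroup (G : Type*) [AddCommGroup G] [TopologicalSpace G] : AddSubgroup G :=
  ⨅ H ∈ {H : AddSubgroup G | IsOpen (H : Set G) ∧ IsPureSubgroup H}, H

/-- The OP subgroup of a subgroup `H` of `G` (with the subspace topology), regarded as a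
subgroup of `G`: the intersection of all `K ≤ H` that are open in `H` and pure in `H`. -/
def opSubgroupIn {G : Type*} [AddCommGroup G] [TopologicalSpace G]
    (H : AddSubgroup G) : AddSubgroup G :=
  ⨅ K ∈ {K : AddSubgroup G | K ≤ H ∧
      IsOpen (((↑) : H → G) ⁻¹' (K : Set G)) ∧ IsPureIn K H}, K

/-- The discrete group `ℚ/ℤ`. -/
def QZ : Type := ℚ ⧸ AddSubgroup.zmultiples (1 : ℚ)
instance : AddCommGroup QZ :=
  inferInstanceAs (AddCommGroup (ℚ ⧸ AddSubgroup.zmultiples (1 : ℚ)))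
instance : TopologicalSpace QZ := ⊥
instance : DiscreteTopology QZ := ⟨rfl⟩
instance : IsTopologicalAddGroup QZ where
  continuous_add := continuous_of_discreteTopology
  continuous_neg := continuous_of_discreteTopology

/-- The Pontryagin dual of the discrete group `ℚ/ℤ`: the group of continuous
homomorphisms to the circle group `ℝ/ℤ`, with the compact-open topology. -/
def K : Type := ContinuousAddMonoidHom QZ (AddCircle (1 : ℝ))
noncomputable instance : AddCommGroup K :=
  inferInstanceAs (AddCommGroup (ContinuousAddMonoidHom QZ (AddCircle (1 : ℝ))))
noncomputable instance : TopologicalSpace K :=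
  inferInstanceAs (TopologicalSpace (ContinuousAddMonoidHom QZ (AddCircle (1 : ℝ))))

/-! ### Auxiliary material -/

noncomputable instance : FunLike K QZ (AddCircle (1 : ℝ)) :=
  inferInstanceAs (FunLike (ContinuousAddMonoidHom QZ (AddCircle (1 : ℝ))) QZ (AddCircle (1 : ℝ)))

noncomputable instance : AddMonoidHomClass K QZ (AddCircle (1 : ℝ)) :=
  inferInstanceAs
    (AddMonoidHomClass (ContinuousAddMonoidHom QZ (AddCircle (1 : ℝ))) QZ (AddCircle (1 : ℝ)))

noncomputable instance : ContinuousEvalConst K QZ (AddCircle (1 : ℝ)) :=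
  inferInstanceAs
    (ContinuousEvalConst (ContinuousAddMonoidHom QZ (AddCircle (1 : ℝ))) QZ (AddCircle (1 : ℝ)))

lemma K.zero_apply (q : QZ) : (0 : K) q = 0 := rfl

lemma K.add_apply (φ ψ : K) (q : QZ) : (φ + ψ) q = φ q + ψ q := rfl

lemma K.nsmul_apply (n : ℕ) (φ : K) (q : QZ) : (n • φ) q = n • (φ q) := by
  induction n with
  | zero => simp [K.zero_apply]
  | succ n ih => rw [succ_nsmul, succ_nsmul, K.add_apply, ih]

/-- The quotient map `ℚ → ℚ/ℤ`. -/
noncomputable def qzmk : ℚ →+ QZ := QuotientAddGroup.mk' (AddSubgroup.zmultiples (1 : ℚ))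

lemma qzmk_surj : Function.Surjective qzmk := QuotientAddGroup.mk'_surjective _

lemma qzmk_eq_zero (q : ℚ) : qzmk q = 0 ↔ ∃ z : ℤ, (z : ℚ) = q := by
  show (QuotientAddGroup.mk' (AddSubgroup.zmultiples (1:ℚ))) q =
    (0 : ℚ ⧸ AddSubgroup.zmultiples (1 : ℚ)) ↔ _
  rw [QuotientAddGroup.mk'_apply, QuotientAddGroup.eq_zero_iff,
    AddSubgroup.mem_zmultiples_iff]
  simp

lemma QZ.torsion (x : QZ) : ∃ m : ℕ, 0 < m ∧ m • x = 0 := by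
  obtain ⟨q, rfl⟩ := qzmk_surj x
  refine ⟨q.den, q.pos, ?_⟩
  rw [← map_nsmul, qzmk_eq_zero]
  exact ⟨q.num, by rw [nsmul_eq_mul]; exact_mod_cast (Rat.den_mul_eq_num q).symm⟩

lemma QZ.divisible (x : QZ) {n : ℕ} (hn : 0 < n) : ∃ y, n • y = x := by
  obtain ⟨q, rfl⟩ := qzmk_surj x
  refine ⟨qzmk (q / n), by rw [← map_nsmul, nsmul_eq_mul]; congr 1; field_simp⟩

/-- The element `1/2` of `ℚ/ℤ`. -/
noncomputable def halfQZ : QZ := qzmk (1/2)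

lemma two_smul_halfQZ : (2 : ℕ) • halfQZ = 0 := by
  rw [halfQZ, ← map_nsmul, qzmk_eq_zero]
  exact ⟨1, by norm_num⟩

lemma halfQZ_ne_zero : halfQZ ≠ 0 := by
  intro h0
  rw [halfQZ, qzmk_eq_zero] at h0
  obtain ⟨z, hz⟩ := h0
  have : (2 * z : ℚ) = 1 := by rw [hz]; norm_num
  have : (2 * z : ℤ) = 1 := by exact_mod_cast this
  omega

lemma pow3_smul_halfQZ (k : ℕ) : (3 ^ k : ℕ) • halfQZ ≠ 0 := by
  intro h0
  rw [halfQZ, ← map_nsmul, qzmk_eq_zero] at h0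
  obtain ⟨z, hz⟩ := h0
  rw [nsmul_eq_mul] at hz
  have : (2 * z : ℚ) = 3 ^ k := by push_cast at hz ⊢; linarith
  have h2 : (2 * z : ℤ) = 3 ^ k := by exact_mod_cast this
  have : (2 : ℤ) ∣ 3 ^ k := ⟨z, h2.symm⟩
  have := Int.Prime.dvd_pow' (by norm_num : Nat.Prime 2) this
  norm_num at this

/-- The 3-primary component of `ℚ/ℤ`. -/
def H3 : AddSubgroup QZ where
  carrier := {x | ∃ k : ℕ, (3 ^ k : ℕ) • x = 0}
  zero_mem' := ⟨0, smul_zero _⟩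
  add_mem' := by
    rintro a b ⟨k, hk⟩ ⟨l, hl⟩
    refine ⟨k + l, ?_⟩
    rw [smul_add, pow_add, mul_comm, mul_smul, hk, smul_zero, mul_smul, smul_comm, hl,
      smul_zero, add_zero]
  neg_mem' := by
    rintro a ⟨k, hk⟩
    exact ⟨k, by rw [smul_neg, hk, neg_zero]⟩

lemma halfQZ_not_mem_H3 : halfQZ ∉ H3 := by
  rintro ⟨k, hk⟩; exact pow3_smul_halfQZ k hk

lemma H3_divisible {n : ℕ} (hn : 0 < n) (y : QZ) (hy : y ∈ H3) : ∃ x ∈ H3, n • x = y := by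
  obtain ⟨k, hk⟩ := hy
  set j := n.factorization 3 with hj
  set m := n / 3 ^ j with hm
  have hcop : Nat.Coprime 3 m := Nat.coprime_ordCompl (by norm_num) hn.ne'
  have hnm : n = 3 ^ j * m := (Nat.ordProj_mul_ordCompl_eq_self n 3).symm
  obtain ⟨z, hz⟩ := QZ.divisible y (n := 3 ^ j) (pow_pos (by norm_num) j)
  have hzH : (3 ^ (k + j) : ℕ) • z = 0 := by
    rw [pow_add, mul_smul, hz, hk]
  have hcop2 : Nat.Coprime m (3 ^ (k + j)) := (Nat.Coprime.pow_right _ hcop.symm)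
  obtain ⟨u, v, huv⟩ : ∃ u v : ℤ, u * m + v * 3 ^ (k + j) = 1 := by
    have h1 := Nat.Coprime.gcd_eq_one hcop2
    refine ⟨Nat.gcdA m (3 ^ (k + j)), Nat.gcdB m (3 ^ (k + j)), ?_⟩
    have h := Nat.gcd_eq_gcd_ab m (3 ^ (k + j))
    rw [h1] at h
    push_cast at h ⊢
    linarith
  have hz3 : ((3:ℤ) ^ (k + j)) • z = 0 := by
    have h := hzH
    rw [← Nat.cast_smul_eq_nsmul ℤ] at h
    push_cast at h
    exact h
  refine ⟨u • z, ⟨k + j, ?_⟩, ?_⟩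
  · rw [← Nat.cast_smul_eq_nsmul ℤ, smul_comm]
    push_cast
    rw [hz3, smul_zero]
  · have h1 : (m : ℤ) • (u • z) = z := by
      rw [smul_smul]
      have he : (m : ℤ) * u = 1 - v * 3 ^ (k + j) := by linarith
      rw [he, sub_smul, one_smul, mul_smul, hz3, smul_zero, sub_zero]
    have h2 : n • (u • z) = (3 ^ j : ℕ) • ((m:ℕ) • (u • z)) := by
      rw [← mul_smul, ← hnm]
    rw [h2, ← Nat.cast_smul_eq_nsmul ℤ m (u • z), h1, hz]

lemma H3_pure : IsPureSubgroup H3 := by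
  intro n hn
  ext y
  constructor
  · rintro ⟨x, hx, rfl⟩
    obtain ⟨k, hk⟩ := hx
    exact ⟨⟨k, by rw [smul_comm, hk, smul_zero]⟩, ⟨x, Set.mem_univ x, rfl⟩⟩
  · rintro ⟨hy, -⟩
    obtain ⟨x, hxH, hx⟩ := H3_divisible hn y hy
    exact ⟨x, hxH, hx⟩

/-- The special point `1/2` of the circle. -/
noncomputable def cC : AddCircle (1 : ℝ) := ((1/2 : ℝ) : AddCircle (1:ℝ))

lemma cC_ne_zero : cC ≠ 0 := by
  rw [cC, Ne, AddCircle.coe_eq_zero_iff]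
  rintro ⟨n, hn⟩
  have : (2 * n : ℝ) = 1 := by
    rw [zsmul_eq_mul, mul_one] at hn
    linarith
  have : (2 * n : ℤ) = 1 := by exact_mod_cast this
  omega

lemma two_smul_cC : (2 : ℕ) • cC = 0 := by
  rw [cC, ← AddCircle.coe_nsmul, AddCircle.coe_eq_zero_iff]
  exact ⟨1, by push_cast [nsmul_eq_mul, zsmul_eq_mul]; norm_num⟩

lemma two_torsion_circle (x : AddCircle (1:ℝ)) (hx : (2:ℕ) • x = 0) : x = 0 ∨ x = cC := by
  induction x using QuotientAddGroup.induction_on with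
  | H r =>
  rw [← AddCircle.coe_nsmul] at hx
  rw [AddCircle.coe_eq_zero_iff] at hx
  obtain ⟨z, hz⟩ := hx
  rw [zsmul_eq_mul, mul_one] at hz
  have hr : r = z / 2 := by
    have : (2:ℕ) • r = 2 * r := by push_cast [nsmul_eq_mul]; ring
    rw [this] at hz; linarith
  rcases Int.even_or_odd z with ⟨w, hw⟩ | ⟨w, hw⟩
  · left
    rw [hr, hw, AddCircle.coe_eq_zero_iff]
    exact ⟨w, by push_cast [zsmul_eq_mul]; ring⟩
  · right
    rw [hr, hw, cC, ← sub_eq_zero, ← AddCircle.coe_sub,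
      show ((2*w+1:ℤ):ℝ)/2 - 1/2 = (w:ℝ) by push_cast; ring, AddCircle.coe_eq_zero_iff]
    exact ⟨w, by simp [zsmul_eq_mul]⟩

/-- Any character takes `halfQZ` to `0` or to `cC`. -/
lemma char_half (φ : K) : φ halfQZ = 0 ∨ φ halfQZ = cC := by
  apply two_torsion_circle
  rw [← map_nsmul, two_smul_halfQZ, map_zero]

/-- The canonical inclusion `ℚ/ℤ → ℝ/ℤ` as an additive hom. -/
noncomputable def iotaHom : QZ →+ AddCircle (1 : ℝ) := by
  refine QuotientAddGroup.lift (AddSubgroup.zmultiples (1 : ℚ))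
    ((QuotientAddGroup.mk' (AddSubgroup.zmultiples (1 : ℝ))).comp
      (Rat.castHom ℝ).toAddMonoidHom) ?_
  intro q hq
  obtain ⟨z, hz⟩ := AddSubgroup.mem_zmultiples_iff.mp hq
  simp only [AddMonoidHom.comp_apply, QuotientAddGroup.mk'_apply, RingHom.toAddMonoidHom_eq_coe,
    AddMonoidHom.coe_coe, Rat.cast_def]
  show ((q : ℝ) : AddCircle (1:ℝ)) = 0
  rw [AddCircle.coe_eq_zero_iff]
  refine ⟨z, ?_⟩
  rw [← hz]
  push_cast [zsmul_eq_mul]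
  norm_num

lemma iotaHom_qzmk (q : ℚ) : iotaHom (qzmk q) = ((q : ℝ) : AddCircle (1:ℝ)) := rfl

/-- The canonical inclusion as an element of `K`. -/
noncomputable def iota : K :=
  { toAddMonoidHom := iotaHom
    continuous_toFun := continuous_of_discreteTopology }

lemma iota_apply (x : QZ) : iota x = iotaHom x := rfl

lemma iota_half : iota halfQZ = cC := by
  rw [iota_apply, halfQZ, iotaHom_qzmk, cC]
  norm_num

/-- `K` is torsion-free. -/
lemma K.torsion_free {n : ℕ} (hn : 0 < n) (φ : K) (hφ : n • φ = 0) : φ = 0 := by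
  apply DFunLike.ext
  intro q
  obtain ⟨y, hy⟩ := QZ.divisible q hn
  rw [K.zero_apply, ← hy, map_nsmul, ← K.nsmul_apply, hφ, K.zero_apply]

/-- The coercion of `K` into the product space. -/
noncomputable def Phi : K → (QZ → AddCircle (1:ℝ)) := fun φ q => φ q

lemma inst_eq : (inferInstance : TopologicalSpace K) =
    TopologicalSpace.induced
      (ContinuousAddMonoidHom.toContinuousMap :
        ContinuousAddMonoidHom QZ (AddCircle (1:ℝ)) → C(QZ, AddCircle (1:ℝ)))
      ContinuousMap.compactOpen := rfl

lemma ptwise_le :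
    TopologicalSpace.induced Phi Pi.topologicalSpace ≤ (inferInstance : TopologicalSpace K) := by
  rw [inst_eq, ContinuousMap.compactOpen_eq]
  apply @le_induced_generateFrom K _ (TopologicalSpace.induced Phi Pi.topologicalSpace)
  rintro a ⟨C, hC, U, hU, rfl⟩
  have hCfin : C.Finite := hC.finite_of_discrete
  have he : (ContinuousAddMonoidHom.toContinuousMap ⁻¹'
      {f : C(QZ, AddCircle (1:ℝ)) | Set.MapsTo f C U}) =
      ⋂ q ∈ C, Phi ⁻¹' {g : QZ → AddCircle (1:ℝ) | g q ∈ U} := by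
    ext φ
    simp only [Set.mem_preimage, Set.MapsTo, Set.mem_iInter, Set.mem_setOf_eq, Phi]
    exact ⟨fun h => Set.mem_iInter₂.mpr fun q hq => h hq, fun h q hq => Set.mem_iInter₂.mp h q hq⟩
  refine (congrArg (@IsOpen K (TopologicalSpace.induced Phi Pi.topologicalSpace)) he).mpr ?_
  exact @Set.Finite.isOpen_biInter K QZ (TopologicalSpace.induced Phi Pi.topologicalSpace) _ _
    hCfin fun q hq => isOpen_induced ((continuous_apply q).isOpen_preimage _ hU)

/-- Every open pure subgroup of `K` contains `iota`. -/
lemma openPure_contains_iota (H : AddSubgroup K) (hopen : IsOpen (H : Set K))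
    (hpure : IsPureSubgroup H) : iota ∈ H := by
  classical
  set tP : TopologicalSpace K := TopologicalSpace.induced Phi Pi.topologicalSpace with htP
  have hOp : tP.IsOpen (H : Set K) := (TopologicalSpace.le_def.mp ptwise_le) _ hopen
  have h0 : (H : Set K) ∈ @nhds K tP 0 := by
    letI : TopologicalSpace K := tP
    exact IsOpen.mem_nhds hOp H.zero_mem
  rw [htP, @nhds_induced] at h0
  obtain ⟨V, hV, hVH⟩ := Filter.mem_comap.mp h0
  rw [nhds_pi, Filter.mem_pi] at hV
  obtain ⟨I, hIfin, t, ht, htV⟩ := hV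
  have hΦ0 : ∀ q, Phi 0 q = 0 := fun q => rfl
  choose m hmpos hm using QZ.torsion
  set n : ℕ := hIfin.toFinset.prod m with hn
  have hnpos : 0 < n := Finset.prod_pos fun q _ => hmpos q
  have hann : ∀ q ∈ I, n • q = 0 := by
    intro q hq
    obtain ⟨c, hc⟩ : m q ∣ n := Finset.dvd_prod_of_mem _ (hIfin.mem_toFinset.mpr hq)
    rw [hc, mul_comm, mul_smul, hm q, smul_zero]
  have hsmul_mem : ∀ ψ : K, n • ψ ∈ H := by
    intro ψ
    apply hVH
    apply htV
    intro q hq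
    have hz : Phi (n • ψ) q = 0 := by
      show (n • ψ) q = 0
      rw [K.nsmul_apply, ← map_nsmul, hann q hq, map_zero]
    rw [hz]
    have hq0 := ht q
    rw [hΦ0 q] at hq0
    exact mem_of_mem_nhds hq0
  have hpr := hpure n hnpos
  have hmem : n • iota ∈ (fun x : K => n • x) '' (H : Set K) := by
    rw [hpr]
    exact ⟨hsmul_mem iota, ⟨iota, Set.mem_univ _, rfl⟩⟩
  obtain ⟨h, hh, hhn⟩ := hmem
  have hhn' : n • h = n • iota := hhn
  have heq : h = iota := by
    have hsub : n • (h - iota) = 0 := by rw [smul_sub, hhn', sub_self]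
    have := K.torsion_free hnpos _ hsub
    rwa [sub_eq_zero] at this
  rwa [← heq]

/-- The two fibers of evaluation at `halfQZ` are open in `K`. -/
lemma fiber_cC_open : IsOpen {φ : K | φ halfQZ = cC} := by
  have : {φ : K | φ halfQZ = cC} = (fun φ : K => φ halfQZ) ⁻¹' {(0 : AddCircle (1:ℝ))}ᶜ := by
    ext φ
    simp only [Set.mem_setOf_eq, Set.mem_preimage, Set.mem_compl_iff, Set.mem_singleton_iff]
    constructor
    · intro h h0; rw [h] at h0; exact cC_ne_zero h0
    · intro h; rcases char_half φ with h0 | hc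
      · exact absurd h0 h
      · exact hc
  rw [this]
  exact (continuous_eval_const halfQZ).isOpen_preimage _ isClosed_singleton.isOpen_compl

lemma fiber_zero_open : IsOpen {φ : K | ¬ φ halfQZ = cC} := by
  have : {φ : K | ¬ φ halfQZ = cC} = (fun φ : K => φ halfQZ) ⁻¹' {cC}ᶜ := rfl
  rw [this]
  exact (continuous_eval_const halfQZ).isOpen_preimage _ isClosed_singleton.isOpen_compl

/-- The underlying function of our homomorphism `K → ℚ/ℤ`. -/
noncomputable def fFun : K → QZ := fun φ => if φ halfQZ = cC then halfQZ else 0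

lemma fFun_add (φ ψ : K) : fFun (φ + ψ) = fFun φ + fFun ψ := by
  have hsum : (φ + ψ) halfQZ = φ halfQZ + ψ halfQZ := K.add_apply φ ψ halfQZ
  have h2cC : cC + cC = 0 := by
    have := two_smul_cC
    rwa [two_nsmul] at this
  have h2h : halfQZ + halfQZ = 0 := by
    have := two_smul_halfQZ
    rwa [two_nsmul] at this
  rcases char_half φ with hφ | hφ <;> rcases char_half ψ with hψ | hψ
  · simp only [fFun, hsum, hφ, hψ, add_zero]
    rw [if_neg (Ne.symm cC_ne_zero)]
    simp
  · simp only [fFun, hsum, hφ, hψ, zero_add]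
    rw [if_neg (Ne.symm cC_ne_zero), zero_add]
  · simp only [fFun, hsum, hφ, hψ, add_zero]
    rw [if_neg (Ne.symm cC_ne_zero), add_zero]
  · show (if (φ + ψ) halfQZ = cC then halfQZ else 0) =
      (if φ halfQZ = cC then halfQZ else 0) + (if ψ halfQZ = cC then halfQZ else 0)
    rw [hsum, hφ, hψ, h2cC, if_neg (Ne.symm cC_ne_zero), if_pos (rfl : cC = cC), h2h]

lemma fFun_locally_constant : IsLocallyConstant fFun := by
  intro s
  classical
  by_cases h1 : halfQZ ∈ s <;> by_cases h0 : (0 : QZ) ∈ s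
  · have : fFun ⁻¹' s = Set.univ := by
      ext φ
      simp only [Set.mem_preimage, Set.mem_univ, iff_true, fFun]
      split <;> assumption
    rw [this]; exact isOpen_univ
  · have : fFun ⁻¹' s = {φ : K | φ halfQZ = cC} := by
      ext φ
      simp only [Set.mem_preimage, Set.mem_setOf_eq, fFun]
      split <;> simp_all [halfQZ_ne_zero]
    rw [this]; exact fiber_cC_open
  · have : fFun ⁻¹' s = {φ : K | ¬ φ halfQZ = cC} := by
      ext φ
      simp only [Set.mem_preimage, Set.mem_setOf_eq, fFun]
      split <;> simp_all [halfQZ_ne_zero]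
    rw [this]; exact fiber_zero_open
  · have : fFun ⁻¹' s = ∅ := by
      ext φ
      simp only [Set.mem_preimage, Set.mem_empty_iff_false, iff_false, fFun]
      split <;> assumption
    rw [this]; exact isOpen_empty

/-- The homomorphism `f : K → ℚ/ℤ`. -/
noncomputable def fHom : ContinuousAddMonoidHom K QZ :=
  { toFun := fFun
    map_zero' := by
      simp only [fFun, K.zero_apply]
      exact if_neg (Ne.symm cC_ne_zero)
    map_add' := fFun_add
    continuous_toFun := fFun_locally_constant.continuous }

lemma fHom_iota : fHom iota = halfQZ := by
  show fFun iota = halfQZ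
  rw [fFun, if_pos iota_half]

/-- There is a nonzero continuous homomorphism `f` from the Pontryagin dual `K` of
discrete `ℚ/ℤ` to discrete `ℚ/ℤ`; consequently (since `K_op = K` and `(ℚ/ℤ)_op = 0`)
the inclusion `f(K_op) ⊆ (ℚ/ℤ)_op` fails for it, so mapping of OP subgroups can fail
when the codomain is not torsion-free. -/
theorem exists_nonzero_hom_dual_QZ_to_QZ_opSubgroup_not_mapped :
    ∃ f : ContinuousAddMonoidHom K QZ, f ≠ 0 ∧
      ¬ (∀ x ∈ opSubgroup K, f x ∈ opSubgroup QZ) := by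
  refine ⟨fHom, ?_, ?_⟩
  · intro h
    apply halfQZ_ne_zero
    rw [← fHom_iota, h]
    rfl
  · intro hall
    have hiota : iota ∈ opSubgroup K := by
      rw [opSubgroup]
      refine AddSubgroup.mem_iInf.mpr fun H => AddSubgroup.mem_iInf.mpr fun hH => ?_
      exact openPure_contains_iota H hH.1 hH.2
    have := hall iota hiota
    rw [fHom_iota] at this
    have hH3 : halfQZ ∈ H3 := by
      have hmem : H3 ∈ {H : AddSubgroup QZ | IsOpen (H : Set QZ) ∧ IsPureSubgroup H} :=
        ⟨isOpen_discrete _, H3_pure⟩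
      rw [opSubgroup] at this
      exact (AddSubgroup.mem_iInf.mp ((AddSubgroup.mem_iInf.mp this) H3)) hmem
    exact halfQZ_not_mem_H3 hH3
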